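/- arXiv:2011.10019 — 2 statements merged into one kernel-verified Lean document; each statement's English description precedes it below -/
import Mathlib

section
/- Let $R_0 \to R_1$ be a unital homomorphism of unital rings and suppose there are units $b_0 = 1, b_1, \dots, b_m \in R_1^{\times}$ which form a basis of $R_1$ as a left $R_0$-module and satisfy: (i) $b_i R_0 = R_0 b_i$ for all $i$; (ii) for all $i,j$ there is $k$ with $b_i b_j \in b_k R_0$; (iii) for all $i$ there is $l$ with $b_i^{-1} \in b_l R_0$. Then for any left $R_1$-module $M$ and any left $R_0$-module $N$, the map $f \mapsto p \circ f$ is an isomorphism of $R_0$-modules $\mathrm{Hom}_{R_1}(M, R_1 \otimes_{R_0} N) \cong \mathrm{Hom}_{R_0}(M, N)$, where $p : R_1 \to R_0$ is the $R_0$-bilinear projection onto the summand $b_0 R_0 = R_0$ in the decomposition $R_1 = \bigoplus_{i=0}^m b_i R_0$. -/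
/-- Let `R₀ → R₁` be a unital ring homomorphism with units
`b 0 = 1, b 1, ..., b m` forming a basis of `R₁` as a left `R₀`-module, satisfying
(i) `bᵢR₀ = R₀bᵢ`, (ii) `bᵢbⱼ ∈ b_k R₀` for some `k`, (iii) `bᵢ⁻¹ ∈ b_l R₀` for some `l`.
Then for any left `R₁`-module `M` and left `R₀`-module `N`, composition with the
`R₀`-bilinear projection `p : R₁ ⊗_{R₀} N → N` onto the summand indexed by `b 0 = 1`
is an isomorphism `Hom_{R₁}(M, R₁ ⊗_{R₀} N) ≅ Hom_{R₀}(M, N)`.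
Here `T` (together with `ι : N → T` and the decomposition `hdecomp`) plays the role
of `R₁ ⊗_{R₀} N = ⨁ᵢ bᵢ ⊗ N`, and the bijectivity of `g ↦ p ∘ g` is expressed by the
unique existence statement. -/
theorem key_lemma_hom_iso
    {R₀ R₁ : Type*} [Ring R₀] [Ring R₁] (f : R₀ →+* R₁)
    (m : ℕ) (b : Fin (m + 1) → R₁ˣ) (hb0 : b 0 = 1)
    (hbasis : ∀ x : R₁, ∃! a : Fin (m + 1) → R₀, x = ∑ i, f (a i) * (b i : R₁))
    (hcomm : ∀ i, {x : R₁ | ∃ r : R₀, x = (b i : R₁) * f r}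
      = {x : R₁ | ∃ r : R₀, x = f r * (b i : R₁)})
    (hmul : ∀ i j, ∃ (k : Fin (m + 1)) (r : R₀),
      (b i : R₁) * (b j : R₁) = (b k : R₁) * f r)
    (hinv : ∀ i, ∃ (l : Fin (m + 1)) (r : R₀),
      (((b i)⁻¹ : R₁ˣ) : R₁) = (b l : R₁) * f r)
    {M : Type*} [AddCommGroup M] [Module R₁ M] [Module R₀ M]
    (hMsmul : ∀ (r : R₀) (x : M), r • x = f r • x)
    {N : Type*} [AddCommGroup N] [Module R₀ N]
    {T : Type*} [AddCommGroup T] [Module R₁ T] [Module R₀ T]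
    (hTsmul : ∀ (r : R₀) (x : T), r • x = f r • x)
    (ι : N →ₗ[R₀] T)
    (hdecomp : ∀ t : T, ∃! c : Fin (m + 1) → N, t = ∑ i, (b i : R₁) • ι (c i))
    (p : T →ₗ[R₀] N)
    (hp : ∀ c : Fin (m + 1) → N, p (∑ i, (b i : R₁) • ι (c i)) = c 0) :
    ∀ h : M →ₗ[R₀] N, ∃! g : M →ₗ[R₁] T, ∀ x : M, p (g x) = h x := by
  intro h
  classical
  by_cases h10 : (1 : R₀) = 0
  · -- degenerate case: the trivial ring
    have h11 : (1 : R₁) = 0 := by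
      calc (1 : R₁) = f 1 := (map_one f).symm
        _ = f 0 := by rw [h10]
        _ = 0 := map_zero f
    have hT : ∀ t : T, t = 0 := fun t => by
      rw [← one_smul R₁ t, h11, zero_smul]
    have hN : ∀ n : N, n = 0 := fun n => by
      rw [← one_smul R₀ n, h10, zero_smul]
    refine ⟨0, fun x => ?_, fun g' _ => ?_⟩
    · rw [LinearMap.zero_apply, map_zero, hN (h x)]
    · ext x
      rw [hT (g' x), hT ((0 : M →ₗ[R₁] T) x)]
  -- main case
  have uniq : ∀ a a' : Fin (m + 1) → R₀,
      (∑ i, f (a i) * (b i : R₁)) = ∑ i, f (a' i) * (b i : R₁) → a = a' := by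
    intro a a' hee
    obtain ⟨c, -, hu⟩ := hbasis (∑ i, f (a i) * (b i : R₁))
    rw [hu a rfl, hu a' hee]
  have hc1 : ∀ (i) (r : R₀), ∃ r', (b i : R₁) * f r = f r' * (b i : R₁) := by
    intro i r
    have hmem : (b i : R₁) * f r ∈ {x : R₁ | ∃ r : R₀, x = (b i : R₁) * f r} := ⟨r, rfl⟩
    rw [hcomm i] at hmem
    exact hmem
  have hc2 : ∀ (i) (r : R₀), ∃ r', f r * (b i : R₁) = (b i : R₁) * f r' := by
    intro i r
    have hmem : f r * (b i : R₁) ∈ {x : R₁ | ∃ r : R₀, x = f r * (b i : R₁)} := ⟨r, rfl⟩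
    rw [← hcomm i] at hmem
    exact hmem
  have rep_single : ∀ (k : Fin (m + 1)) (t : R₀),
      f t * (b k : R₁) = ∑ i, f ((Pi.single k t : Fin (m + 1) → R₀) i) * (b i : R₁) := by
    intro k t
    rw [Finset.sum_eq_single k (fun i _ hik => by
        rw [Pi.single_eq_of_ne hik, map_zero, zero_mul])
      (fun hk => absurd (Finset.mem_univ k) hk), Pi.single_eq_same]
  have factE : ∀ (k : Fin (m + 1)) (t : R₀), (b k : R₁) * f t = 1 → k = 0 := by
    intro k t hkt
    by_contra hk0
    obtain ⟨t', ht'⟩ := hc1 k t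
    have e1 : (1 : R₁) = ∑ i, f ((Pi.single k t' : Fin (m + 1) → R₀) i) * (b i : R₁) := by
      rw [← rep_single, ← ht', hkt]
    have e0 : (1 : R₁) = ∑ i, f ((Pi.single (0 : Fin (m + 1)) (1 : R₀) : Fin (m + 1) → R₀) i) * (b i : R₁) := by
      rw [← rep_single, map_one, one_mul, hb0, Units.val_one]
    have hee := congrFun (uniq _ _ (e0.symm.trans e1)) 0
    rw [Pi.single_eq_same, Pi.single_eq_of_ne (fun hh => hk0 hh.symm)] at hee
    exact h10 hee
  have factF : ∀ (i j : Fin (m + 1)) (r : R₀), i ≠ j → (b i : R₁) ≠ (b j : R₁) * f r := by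
    intro i j r hij hE
    obtain ⟨r', hr'⟩ := hc1 j r
    have e1 : (b i : R₁) = ∑ l, f ((Pi.single j r' : Fin (m + 1) → R₀) l) * (b l : R₁) := by
      rw [← rep_single, ← hr', hE]
    have e0 : (b i : R₁) = ∑ l, f ((Pi.single i (1 : R₀) : Fin (m + 1) → R₀) l) * (b l : R₁) := by
      rw [← rep_single, map_one, one_mul]
    have hee := congrFun (uniq _ _ (e0.symm.trans e1)) i
    rw [Pi.single_eq_same, Pi.single_eq_of_ne hij] at hee
    exact h10 hee
  choose K R hKR using hmul
  choose L S hLS using hinv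
  have smul_ι : ∀ (k : Fin (m + 1)) (r : R₀) (n : N),
      ((b k : R₁) * f r) • ι n = (b k : R₁) • ι (r • n) := by
    intro k r n
    rw [mul_smul, map_smul, hTsmul]
  have regroup : ∀ (k : Fin (m + 1) → Fin (m + 1)) (v : Fin (m + 1) → N),
      (∑ i, (b (k i) : R₁) • ι (v i))
      = ∑ k0, (b k0 : R₁) • ι (∑ i ∈ Finset.univ.filter (fun i => k i = k0), v i) := by
    intro k v
    calc (∑ i, (b (k i) : R₁) • ι (v i))
        = ∑ k0, ∑ i ∈ Finset.univ.filter (fun i => k i = k0), (b (k i) : R₁) • ι (v i) :=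
          (Finset.sum_fiberwise_of_maps_to (fun i _ => Finset.mem_univ (k i)) _).symm
      _ = _ := Finset.sum_congr rfl fun k0 _ => by
          rw [map_sum, Finset.smul_sum]
          exact Finset.sum_congr rfl fun i hi => by rw [(Finset.mem_filter.mp hi).2]
  -- Lemma B: extracting the j-th coefficient
  have pB : ∀ (j : Fin (m + 1)) (c : Fin (m + 1) → N),
      p ((((b j)⁻¹ : R₁ˣ) : R₁) • ∑ i, (b i : R₁) • ι (c i)) = c j := by
    intro j c
    have key : ∀ i : Fin (m + 1), ∃ (k : Fin (m + 1)) (r : R₀),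
        ((((b j)⁻¹ : R₁ˣ) : R₁) * (b i : R₁) = (b k : R₁) * f r) ∧
        (k = 0 ↔ i = j) ∧ (i = j → r = 1) := by
      intro i
      by_cases hij : i = j
      · subst hij
        exact ⟨0, 1, by rw [hb0, Units.val_one, map_one, mul_one, Units.inv_mul],
          by simp, fun _ => rfl⟩
      · obtain ⟨s', hs'⟩ := hc2 i (S j)
        refine ⟨K (L j) i, R (L j) i * s', ?_, ?_, fun hh => absurd hh hij⟩
        · rw [hLS j, mul_assoc, hs', ← mul_assoc, hKR (L j) i, mul_assoc, ← map_mul]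
        · constructor
          · intro hk0
            exfalso
            apply factF i j (R (L j) i * s') hij
            have hform : (((b j)⁻¹ : R₁ˣ) : R₁) * (b i : R₁) = f (R (L j) i * s') := by
              rw [hLS j, mul_assoc, hs', ← mul_assoc, hKR (L j) i, mul_assoc, ← map_mul, hk0,
                hb0, Units.val_one, one_mul]
            calc (b i : R₁) = (b j : R₁) * ((((b j)⁻¹ : R₁ˣ) : R₁) * (b i : R₁)) := by
                  rw [← mul_assoc, Units.mul_inv, one_mul]
              _ = (b j : R₁) * f (R (L j) i * s') := by rw [hform]
          · intro hh; exact absurd hh hij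
    choose k r heq hiff hone using key
    have filt : Finset.univ.filter (fun i => k i = 0) = {j} := by
      ext i
      simp [hiff i]
    have expand : (((b j)⁻¹ : R₁ˣ) : R₁) • (∑ i, (b i : R₁) • ι (c i))
        = ∑ i, (b (k i) : R₁) • ι (r i • c i) := by
      rw [Finset.smul_sum]
      exact Finset.sum_congr rfl fun i _ => by rw [smul_smul, heq i, smul_ι]
    calc p ((((b j)⁻¹ : R₁ˣ) : R₁) • ∑ i, (b i : R₁) • ι (c i))
        = p (∑ k0, (b k0 : R₁) • ι
            (∑ i ∈ Finset.univ.filter (fun i => k i = k0), r i • c i)) := by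
          rw [expand, regroup k (fun i => r i • c i)]
      _ = ∑ i ∈ Finset.univ.filter (fun i => k i = 0), r i • c i := hp _
      _ = c j := by rw [filt, Finset.sum_singleton, hone j rfl, one_smul]
  -- Lemma A: vanishing criterion
  have pA : ∀ t : T, (∀ j, p ((((b j)⁻¹ : R₁ˣ) : R₁) • t) = 0) → t = 0 := by
    intro t ht
    obtain ⟨c, hc, -⟩ := hdecomp t
    have hcz : ∀ j, c j = 0 := by
      intro j
      rw [← pB j c, ← hc]
      exact ht j
    rw [hc]
    simp [hcz]
  -- the candidate map
  let g0 : M → T := fun x => ∑ j, (b j : R₁) • ι (h ((((b j)⁻¹ : R₁ˣ) : R₁) • x))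
  have hg0x : ∀ x, g0 x = ∑ j, (b j : R₁) • ι (h ((((b j)⁻¹ : R₁ˣ) : R₁) • x)) :=
    fun _ => rfl
  have hpg0 : ∀ x, p (g0 x) = h x := by
    intro x
    rw [hg0x x]
    refine (hp _).trans ?_
    rw [hb0]
    simp
  have pDb : ∀ (i : Fin (m + 1)) (x : M),
      p ((b i : R₁) • g0 x) = h ((b i : R₁) • x) := by
    intro i x
    have hK0 : ∀ j, K i j = 0 ↔ j = L i := by
      intro j
      constructor
      · intro hk0
        by_contra hjL
        apply factF j (L i) (S i * R i j) hjL
        have h1 : (b i : R₁) * (b j : R₁) = f (R i j) := by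
          rw [hKR i j, hk0, hb0, Units.val_one, one_mul]
        calc (b j : R₁) = (((b i)⁻¹ : R₁ˣ) : R₁) * ((b i : R₁) * (b j : R₁)) := by
              rw [← mul_assoc, Units.inv_mul, one_mul]
          _ = (b (L i) : R₁) * f (S i) * f (R i j) := by rw [h1, hLS i]
          _ = (b (L i) : R₁) * f (S i * R i j) := by rw [mul_assoc, ← map_mul]
      · intro hj
        subst hj
        have hone : (b (K i (L i)) : R₁) * f (R i (L i) * S i) = 1 := by
          rw [map_mul, ← mul_assoc, ← hKR i (L i), mul_assoc, ← hLS i, Units.mul_inv]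
        exact factE _ _ hone
    have hk0 : K i (L i) = 0 := (hK0 (L i)).mpr rfl
    have h1 : f (R i (L i)) = (b i : R₁) * (b (L i) : R₁) := by
      rw [hKR i (L i), hk0, hb0, Units.val_one, one_mul]
    have filt : Finset.univ.filter (fun j => K i j = 0) = {L i} := by
      ext j
      simp [hK0 j]
    have expand : (b i : R₁) • g0 x
        = ∑ j, (b (K i j) : R₁) • ι (R i j • h ((((b j)⁻¹ : R₁ˣ) : R₁) • x)) := by
      rw [hg0x x, Finset.smul_sum]
      exact Finset.sum_congr rfl fun j _ => by rw [smul_smul, hKR i j, smul_ι]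
    calc p ((b i : R₁) • g0 x)
        = p (∑ k0, (b k0 : R₁) • ι (∑ j ∈ Finset.univ.filter (fun j => K i j = k0),
            R i j • h ((((b j)⁻¹ : R₁ˣ) : R₁) • x))) := by
          rw [expand, regroup (K i) (fun j => R i j • h ((((b j)⁻¹ : R₁ˣ) : R₁) • x))]
      _ = ∑ j ∈ Finset.univ.filter (fun j => K i j = 0),
            R i j • h ((((b j)⁻¹ : R₁ˣ) : R₁) • x) := hp _
      _ = R i (L i) • h ((((b (L i))⁻¹ : R₁ˣ) : R₁) • x) := by
          rw [filt, Finset.sum_singleton]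
      _ = h ((b i : R₁) • x) := by
          rw [← map_smul, hMsmul, smul_smul, h1, mul_assoc, Units.mul_inv, mul_one]
  have pD : ∀ (s : R₁) (x : M), p (s • g0 x) = h (s • x) := by
    intro s x
    obtain ⟨a, ha, -⟩ := hbasis s
    rw [ha, Finset.sum_smul, Finset.sum_smul, map_sum, map_sum]
    refine Finset.sum_congr rfl fun i _ => ?_
    simp only [mul_smul]
    rw [← hTsmul, ← hMsmul, p.map_smul, h.map_smul, pDb]
  have g0add : ∀ x y, g0 (x + y) = g0 x + g0 y := by
    intro x y
    rw [hg0x, hg0x, hg0x]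
    simp [smul_add, Finset.sum_add_distrib]
  have g0smul : ∀ (s : R₁) (x : M), g0 (s • x) = s • g0 x := by
    intro s x
    have hz : g0 (s • x) - s • g0 x = 0 := by
      apply pA
      intro j
      rw [smul_sub, map_sub, smul_smul, pD, pD, mul_smul, sub_self]
    exact sub_eq_zero.mp hz
  refine ⟨{ toFun := g0, map_add' := g0add, map_smul' := g0smul }, hpg0, ?_⟩
  intro g' hg'
  ext x
  have hz : g' x - g0 x = 0 := by
    apply pA
    intro j
    rw [smul_sub, map_sub, ← map_smul, hg', pD, sub_self]
  exact sub_eq_zero.mp hz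
end

section
/- Let $R_0 \to R_1$ be a ring homomorphism such that $R_1$ is free as a left $R_0$-module on a finite basis of units $b_0 = 1, b_1, \dots, b_m$ satisfying $b_i R_0 = R_0 b_i$, closure of the basis under multiplication up to right $R_0$-multiples, and closure under inverses up to right $R_0$-multiples. If $N$ is an injective left $R_1$-module, then $N$ is also injective as a left $R_0$-module. -/
section Aux

variable {R₀ R₁ : Type*} [Ring R₀] [Ring R₁]

/-- Auxiliary scalar action of `R₁` on `Fin (m+1) → Z`, modelling `R₁ ⊗[R₀] Z` where
`R₁` is free as a *right* `R₀`-module on the basis `b`, with right-coordinate function `ρ`. -/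
def auxSMul (m : ℕ) (b : Fin (m + 1) → R₁ˣ) (ρ : R₁ → Fin (m + 1) → R₀)
    (Z : Type*) [AddCommGroup Z] [Module R₀ Z] : SMul R₁ (Fin (m + 1) → Z) :=
  ⟨fun r y j => ∑ i, ρ (r * (b i : R₁)) j • y i⟩

/-- The auxiliary action is an `R₁`-module structure. -/
def auxModule (m : ℕ) (b : Fin (m + 1) → R₁ˣ) (ρ : R₁ → Fin (m + 1) → R₀)
    (ρ_add : ∀ x y : R₁, ρ (x + y) = ρ x + ρ y)
    (ρ_mul : ∀ (x y : R₁) (j : Fin (m + 1)),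
      ρ (x * y) j = ∑ k, ρ (x * (b k : R₁)) j * ρ y k)
    (ρ_b : ∀ i, ρ ((b i : R₁)) = Pi.single i 1)
    (Z : Type*) [AddCommGroup Z] [Module R₀ Z] :
    Module R₁ (Fin (m + 1) → Z) := by
  letI := auxSMul m b ρ Z
  refine Module.ofMinimalAxioms ?_ ?_ ?_ ?_
  · intro r x y
    funext j
    show (∑ i, ρ (r * (b i : R₁)) j • (x i + y i))
        = (∑ i, ρ (r * (b i : R₁)) j • x i) + ∑ i, ρ (r * (b i : R₁)) j • y i
    rw [← Finset.sum_add_distrib]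
    exact Finset.sum_congr rfl fun i _ => smul_add _ _ _
  · intro r s x
    funext j
    show (∑ i, ρ ((r + s) * (b i : R₁)) j • x i)
        = (∑ i, ρ (r * (b i : R₁)) j • x i) + ∑ i, ρ (s * (b i : R₁)) j • x i
    rw [← Finset.sum_add_distrib]
    refine Finset.sum_congr rfl fun i _ => ?_
    rw [add_mul, ρ_add]
    exact add_smul _ _ _
  · intro r s x
    funext j
    show (∑ i, ρ (r * s * (b i : R₁)) j • x i)
        = ∑ k, ρ (r * (b k : R₁)) j • ∑ i, ρ (s * (b i : R₁)) k • x i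
    calc (∑ i, ρ (r * s * (b i : R₁)) j • x i)
        = ∑ i, ∑ k, (ρ (r * (b k : R₁)) j * ρ (s * (b i : R₁)) k) • x i := by
          refine Finset.sum_congr rfl fun i _ => ?_
          rw [mul_assoc, ρ_mul, Finset.sum_smul]
      _ = ∑ k, ρ (r * (b k : R₁)) j • ∑ i, ρ (s * (b i : R₁)) k • x i := by
          rw [Finset.sum_comm]
          refine Finset.sum_congr rfl fun k _ => ?_
          rw [Finset.smul_sum]
          exact Finset.sum_congr rfl fun i _ => (smul_smul _ _ _).symm
  · intro x
    funext j
    show (∑ i, ρ (1 * (b i : R₁)) j • x i) = x j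
    have : ∀ i, ρ (1 * (b i : R₁)) j • x i = (Pi.single i 1 : Fin (m + 1) → R₀) j • x i := by
      intro i; rw [one_mul, ρ_b]
    rw [Finset.sum_congr rfl fun i _ => this i,
      Fintype.sum_eq_single j]
    · rw [Pi.single_eq_same, one_smul]
    · intro i hi
      rw [Pi.single_eq_of_ne (Ne.symm hi), zero_smul]

end Aux

/-- Let `R₀ → R₁` be a ring homomorphism such that `R₁` is free as a left
`R₀`-module on a finite basis of units `b 0 = 1, b 1, ..., b m` satisfying `bᵢR₀ = R₀bᵢ`,
closure of the basis under multiplication up to right `R₀`-multiples, and closure under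
inverses up to right `R₀`-multiples.  If `N` is an injective left `R₁`-module, then `N`
is also injective as a left `R₀`-module (where the `R₀`-module structure on `N` is obtained
by restriction of scalars along `f`, expressed by the compatibility `hNsmul`). -/
theorem injective_of_restrict
    {R₀ R₁ : Type*} [Ring R₀] [Ring R₁] (f : R₀ →+* R₁)
    (m : ℕ) (b : Fin (m + 1) → R₁ˣ) (hb0 : b 0 = 1)
    (hbasis : ∀ x : R₁, ∃! a : Fin (m + 1) → R₀, x = ∑ i, f (a i) * (b i : R₁))
    (hcomm : ∀ i, {x : R₁ | ∃ r : R₀, x = (b i : R₁) * f r}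
      = {x : R₁ | ∃ r : R₀, x = f r * (b i : R₁)})
    (hmul : ∀ i j, ∃ (k : Fin (m + 1)) (r : R₀),
      (b i : R₁) * (b j : R₁) = (b k : R₁) * f r)
    (hinv : ∀ i, ∃ (l : Fin (m + 1)) (r : R₀),
      (((b i)⁻¹ : R₁ˣ) : R₁) = (b l : R₁) * f r)
    {N : Type*} [AddCommGroup N] [Module R₁ N] [Module R₀ N]
    (hNsmul : ∀ (r : R₀) (x : N), r • x = f r • x)
    (hinj : Module.Injective R₁ N) :
    Module.Injective R₀ N := by
  classical
  have hb0' : ((b 0 : R₁)) = 1 := by rw [hb0]; rfl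
  -- `f` is injective
  have key0 : ∀ t : R₀, f t = ∑ i, f ((Pi.single 0 t : Fin (m + 1) → R₀) i) * (b i : R₁) := by
    intro t
    rw [Fintype.sum_eq_single (0 : Fin (m + 1))]
    · rw [Pi.single_eq_same, hb0', mul_one]
    · intro i hi
      rw [Pi.single_eq_of_ne hi, map_zero, zero_mul]
  have finj : Function.Injective f := by
    intro r s hrs
    have h1 := (hbasis (f r)).unique (key0 r) (by rw [hrs]; exact key0 s)
    have h2 := congrFun h1 0
    rwa [Pi.single_eq_same, Pi.single_eq_same] at h2
  -- `b` is also a basis of `R₁` as a *right* `R₀`-module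
  have rexists : ∀ x : R₁, ∃ c : Fin (m + 1) → R₀, x = ∑ j, (b j : R₁) * f (c j) := by
    intro x
    obtain ⟨a, ha, -⟩ := hbasis x
    have h1 : ∀ j, ∃ r : R₀, f (a j) * (b j : R₁) = (b j : R₁) * f r := by
      intro j
      have mem : f (a j) * (b j : R₁) ∈ {x : R₁ | ∃ r : R₀, x = f r * (b j : R₁)} :=
        ⟨a j, rfl⟩
      rw [← hcomm j] at mem
      exact mem
    choose c hc using h1
    exact ⟨c, by rw [ha]; exact Finset.sum_congr rfl fun j _ => hc j⟩
  have runiq : ∀ (x : R₁) (c c' : Fin (m + 1) → R₀),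
      x = ∑ j, (b j : R₁) * f (c j) → x = ∑ j, (b j : R₁) * f (c' j) → c = c' := by
    intro x c c' h1 h2
    have conv : ∀ c0 : Fin (m + 1) → R₀, ∃ d : Fin (m + 1) → R₀,
        ∀ j, (b j : R₁) * f (c0 j) = f (d j) * (b j : R₁) := by
      intro c0
      have h3 : ∀ j, ∃ r : R₀, (b j : R₁) * f (c0 j) = f r * (b j : R₁) := by
        intro j
        have mem : (b j : R₁) * f (c0 j) ∈ {x : R₁ | ∃ r : R₀, x = (b j : R₁) * f r} :=
          ⟨c0 j, rfl⟩
        rw [hcomm j] at mem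
        exact mem
      choose d hd using h3
      exact ⟨d, hd⟩
    obtain ⟨d, hd⟩ := conv c
    obtain ⟨d', hd'⟩ := conv c'
    have hdd : d = d' := (hbasis x).unique
      (by rw [h1]; exact Finset.sum_congr rfl fun j _ => hd j)
      (by rw [h2]; exact Finset.sum_congr rfl fun j _ => hd' j)
    funext j
    apply finj
    have h4 : (b j : R₁) * f (c j) = (b j : R₁) * f (c' j) := by
      rw [hd j, hd' j, hdd]
    exact (Units.mul_right_inj (b j)).mp h4
  choose ρ hρ using rexists
  have ρeq : ∀ (x : R₁) (c : Fin (m + 1) → R₀),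
      x = ∑ j, (b j : R₁) * f (c j) → ρ x = c :=
    fun x c h => runiq x (ρ x) c (hρ x) h
  -- properties of ρ
  have ρ_add : ∀ x y : R₁, ρ (x + y) = ρ x + ρ y := by
    intro x y
    refine ρeq _ _ ?_
    calc x + y = (∑ j, (b j : R₁) * f (ρ x j)) + ∑ j, (b j : R₁) * f (ρ y j) := by
          rw [← hρ x, ← hρ y]
      _ = ∑ j, (b j : R₁) * f ((ρ x + ρ y) j) := by
          rw [← Finset.sum_add_distrib]
          refine Finset.sum_congr rfl fun j _ => ?_
          rw [Pi.add_apply, map_add, mul_add]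
  have ρ_mul : ∀ (x y : R₁) (j : Fin (m + 1)),
      ρ (x * y) j = ∑ k, ρ (x * (b k : R₁)) j * ρ y k := by
    intro x y j
    have h5 : x * y = ∑ j, (b j : R₁) * f (∑ k, ρ (x * (b k : R₁)) j * ρ y k) := by
      calc x * y = x * ∑ k, (b k : R₁) * f (ρ y k) := by rw [← hρ y]
        _ = ∑ k, (x * (b k : R₁)) * f (ρ y k) := by
            rw [Finset.mul_sum]
            exact Finset.sum_congr rfl fun k _ => (mul_assoc _ _ _).symm
        _ = ∑ k, ∑ j, (b j : R₁) * f (ρ (x * (b k : R₁)) j * ρ y k) := by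
            refine Finset.sum_congr rfl fun k _ => ?_
            conv_lhs => rw [hρ (x * (b k : R₁))]
            rw [Finset.sum_mul]
            exact Finset.sum_congr rfl fun j _ => by rw [mul_assoc, ← map_mul]
        _ = ∑ j, (b j : R₁) * f (∑ k, ρ (x * (b k : R₁)) j * ρ y k) := by
            rw [Finset.sum_comm]
            refine Finset.sum_congr rfl fun j _ => ?_
            rw [map_sum, Finset.mul_sum]
    exact congrFun (ρeq _ _ h5) j
  have ρ_b : ∀ i, ρ ((b i : R₁)) = Pi.single i 1 := by
    intro i
    refine ρeq _ _ ?_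
    rw [Fintype.sum_eq_single i]
    · rw [Pi.single_eq_same, map_one, mul_one]
    · intro j hj
      rw [Pi.single_eq_of_ne hj, map_zero, mul_zero]
  have ρ_f : ∀ a : R₀, ρ (f a) = Pi.single 0 a := by
    intro a
    refine ρeq _ _ ?_
    rw [Fintype.sum_eq_single (0 : Fin (m + 1))]
    · rw [Pi.single_eq_same, hb0', one_mul]
    · intro j hj
      rw [Pi.single_eq_of_ne hj, map_zero, mul_zero]
  -- main argument
  constructor
  intro X Y _ _ _ _ i hi g
  letI mX : Module R₁ (Fin (m + 1) → X) := auxModule m b ρ ρ_add ρ_mul ρ_b X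
  letI mY : Module R₁ (Fin (m + 1) → Y) := auxModule m b ρ ρ_add ρ_mul ρ_b Y
  let iM : (Fin (m + 1) → X) →ₗ[R₁] (Fin (m + 1) → Y) :=
    { toFun := fun x j => i (x j)
      map_add' := by intro x y; funext j; exact map_add i _ _
      map_smul' := by
        intro r x
        funext j
        show i (∑ k, ρ (r * (b k : R₁)) j • x k) = ∑ k, ρ (r * (b k : R₁)) j • i (x k)
        rw [map_sum]
        exact Finset.sum_congr rfl fun k _ => map_smul i _ _ }
  have hiM : Function.Injective iM := by
    intro x y hxy
    funext j
    exact hi (congrFun hxy j)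
  let gN : (Fin (m + 1) → X) →ₗ[R₁] N :=
    { toFun := fun x => ∑ k, ((b k : R₁)) • g (x k)
      map_add' := by
        intro x y
        rw [← Finset.sum_add_distrib]
        refine Finset.sum_congr rfl fun k _ => ?_
        rw [Pi.add_apply, map_add, smul_add]
      map_smul' := by
        intro r x
        show (∑ k, ((b k : R₁)) • g ((r • x) k)) = r • ∑ k, ((b k : R₁)) • g (x k)
        have lhs : ∀ k, ((b k : R₁)) • g ((r • x) k)
            = ∑ t, ((b k : R₁) * f (ρ (r * (b t : R₁)) k)) • g (x t) := by
          intro k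
          show ((b k : R₁)) • g (∑ t, ρ (r * (b t : R₁)) k • x t) = _
          rw [map_sum, Finset.smul_sum]
          refine Finset.sum_congr rfl fun t _ => ?_
          rw [map_smul, hNsmul, smul_smul]
        calc (∑ k, ((b k : R₁)) • g ((r • x) k))
            = ∑ k, ∑ t, ((b k : R₁) * f (ρ (r * (b t : R₁)) k)) • g (x t) :=
              Finset.sum_congr rfl fun k _ => lhs k
          _ = ∑ t, (∑ k, (b k : R₁) * f (ρ (r * (b t : R₁)) k)) • g (x t) := by
              rw [Finset.sum_comm]
              exact Finset.sum_congr rfl fun t _ => (Finset.sum_smul).symm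
          _ = ∑ t, (r * (b t : R₁)) • g (x t) :=
              Finset.sum_congr rfl fun t _ => by rw [← hρ (r * (b t : R₁))]
          _ = r • ∑ t, ((b t : R₁)) • g (x t) := by
              rw [Finset.smul_sum]
              exact Finset.sum_congr rfl fun t _ => mul_smul _ _ _ }
  obtain ⟨h, hh⟩ := hinj.out iM hiM gN
  have key : ∀ (a : R₀) (y : Y),
      (f a) • (Pi.single 0 y : Fin (m + 1) → Y) = (Pi.single 0 (a • y) : Fin (m + 1) → Y) := by
    intro a y
    funext j
    show (∑ t, ρ (f a * (b t : R₁)) j • (Pi.single 0 y : Fin (m + 1) → Y) t)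
        = (Pi.single 0 (a • y) : Fin (m + 1) → Y) j
    rw [Fintype.sum_eq_single (0 : Fin (m + 1))]
    · rw [Pi.single_eq_same, hb0', mul_one, ρ_f a]
      by_cases hj : j = 0
      · subst hj; rw [Pi.single_eq_same, Pi.single_eq_same]
      · rw [Pi.single_eq_of_ne hj, Pi.single_eq_of_ne hj, zero_smul]
    · intro t ht
      rw [Pi.single_eq_of_ne ht, smul_zero]
  refine ⟨{ toFun := fun y => h ((Pi.single 0 y : Fin (m + 1) → Y))
            map_add' := by
              intro y y'
              show h (Pi.single 0 (y + y')) = h (Pi.single 0 y) + h (Pi.single 0 y')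
              rw [Pi.single_add, map_add]
            map_smul' := by
              intro a y
              show h (Pi.single 0 (a • y)) = a • h (Pi.single 0 y)
              rw [← key, map_smul, ← hNsmul] }, ?_⟩
  intro x
  show h (Pi.single 0 (i x)) = g x
  have e1 : (Pi.single 0 (i x) : Fin (m + 1) → Y) = iM (Pi.single 0 x) := by
    funext j
    show (Pi.single 0 (i x) : Fin (m + 1) → Y) j = i ((Pi.single 0 x : Fin (m + 1) → X) j)
    by_cases hj : j = 0
    · subst hj; rw [Pi.single_eq_same, Pi.single_eq_same]
    · rw [Pi.single_eq_of_ne hj, Pi.single_eq_of_ne hj, map_zero]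
  rw [e1, hh]
  show (∑ k, ((b k : R₁)) • g ((Pi.single 0 x : Fin (m + 1) → X) k)) = g x
  rw [Fintype.sum_eq_single (0 : Fin (m + 1))]
  · rw [Pi.single_eq_same, hb0', one_smul]
  · intro t ht
    rw [Pi.single_eq_of_ne ht, map_zero, smul_zero]
end
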